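/- Let S = [[A,B],[C,D]] be a symplectic matrix. Then the restriction of A^T to range(B)^⊥ is an isomorphism from range(B)^⊥ onto ker(B). -/
import Mathlib


open Matrix

private lemma fromBlocks_eq_iff {d : ℕ} (A B C D A' B' C' D' : Matrix (Fin d) (Fin d) ℝ) :
    Matrix.fromBlocks A B C D = Matrix.fromBlocks A' B' C' D' ↔
      A = A' ∧ B = B' ∧ C = C' ∧ D = D' := by
  constructor
  · intro h
    refine ⟨?_, ?_, ?_, ?_⟩ <;> ext i j
    · exact congrFun (congrFun h (Sum.inl i)) (Sum.inl j)
    · exact congrFun (congrFun h (Sum.inl i)) (Sum.inr j)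
    · exact congrFun (congrFun h (Sum.inr i)) (Sum.inl j)
    · exact congrFun (congrFun h (Sum.inr i)) (Sum.inr j)
  · rintro ⟨rfl, rfl, rfl, rfl⟩; rfl

private lemma neg_one_fromBlocks {d : ℕ} :
    (-1 : Matrix (Fin d ⊕ Fin d) (Fin d ⊕ Fin d) ℝ) =
      Matrix.fromBlocks (-1) 0 0 (-1) := by
  ext (i | i) (j | j) <;>
    simp [Matrix.one_apply]

/-- For a symplectic matrix `S = [[A,B],[C,D]]`, the map `Aᵀ` restricts to an isomorphism
from `range(B)ᗮ` onto `ker B`: it maps `range(B)ᗮ` into `ker B`, is injective there, and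
hits every element of `ker B`. -/
theorem symplectic_AT_iso_rangeBperp_kerB (d : ℕ)
    (A B C D : Matrix (Fin d) (Fin d) ℝ)
    (hS : (Matrix.fromBlocks A B C D)ᵀ *
        (Matrix.fromBlocks (0 : Matrix (Fin d) (Fin d) ℝ) (1 : Matrix (Fin d) (Fin d) ℝ)
          (-1 : Matrix (Fin d) (Fin d) ℝ) (0 : Matrix (Fin d) (Fin d) ℝ)) *
        (Matrix.fromBlocks A B C D) =
      Matrix.fromBlocks (0 : Matrix (Fin d) (Fin d) ℝ) (1 : Matrix (Fin d) (Fin d) ℝ)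
        (-1 : Matrix (Fin d) (Fin d) ℝ) (0 : Matrix (Fin d) (Fin d) ℝ)) :
    (∀ y : Fin d → ℝ, (∀ z : Fin d → ℝ, y ⬝ᵥ B.mulVec z = 0) →
        B.mulVec (Aᵀ.mulVec y) = 0) ∧
    Set.InjOn (fun y => Aᵀ.mulVec y)
        {y : Fin d → ℝ | ∀ z : Fin d → ℝ, y ⬝ᵥ B.mulVec z = 0} ∧
    (∀ x : Fin d → ℝ, B.mulVec x = 0 →
        ∃ y : Fin d → ℝ, (∀ z : Fin d → ℝ, y ⬝ᵥ B.mulVec z = 0) ∧ Aᵀ.mulVec y = x) := by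
  set M : Matrix (Fin d ⊕ Fin d) (Fin d ⊕ Fin d) ℝ := Matrix.fromBlocks A B C D with hM
  set J : Matrix (Fin d ⊕ Fin d) (Fin d ⊕ Fin d) ℝ :=
    Matrix.fromBlocks 0 1 (-1) 0 with hJ
  have hJJ : J * J = -1 := by
    rw [hJ, Matrix.fromBlocks_multiply, neg_one_fromBlocks, fromBlocks_eq_iff]
    refine ⟨?_, ?_, ?_, ?_⟩ <;> noncomm_ring
  have hS' : Mᵀ * J * M = J := hS
  have hli : (-(J * Mᵀ * J)) * M = 1 := by
    have h : (J * Mᵀ * J) * M = J * (Mᵀ * J * M) := by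
      simp only [mul_assoc]
    rw [neg_mul, h, hS', hJJ]; simp
  have hri : M * (-(J * Mᵀ * J)) = 1 := mul_eq_one_comm.mp hli
  have hMJMt : M * J * Mᵀ = J := by
    have h : M * (-(J * Mᵀ * J)) = -(M * J * Mᵀ * J) := by
      simp only [mul_neg, mul_assoc]
    rw [h] at hri
    have h1 : M * J * Mᵀ * J = -1 := neg_eq_iff_eq_neg.mp hri
    have h2 := congrArg (· * J) h1
    simp only [mul_assoc, hJJ, mul_neg, mul_one, neg_mul, one_mul, neg_neg] at h2
    simpa [mul_assoc] using h2
  have e1 : Mᵀ * J * M = Matrix.fromBlocks (Cᵀ * (-A) + Aᵀ * C) (Cᵀ * (-B) + Aᵀ * D)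
      (Dᵀ * (-A) + Bᵀ * C) (Dᵀ * (-B) + Bᵀ * D) := by
    rw [hM, hJ, Matrix.fromBlocks_transpose, Matrix.fromBlocks_multiply,
      Matrix.fromBlocks_multiply, fromBlocks_eq_iff]
    refine ⟨?_, ?_, ?_, ?_⟩ <;> noncomm_ring
  rw [e1, hJ] at hS'
  obtain ⟨-, hAD, -, hBD⟩ := (fromBlocks_eq_iff _ _ _ _ _ _ _ _).mp hS'
  have e2 : M * J * Mᵀ = Matrix.fromBlocks (B * (-Aᵀ) + A * Bᵀ) (B * (-Cᵀ) + A * Dᵀ)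
      (D * (-Aᵀ) + C * Bᵀ) (D * (-Cᵀ) + C * Dᵀ) := by
    rw [hM, hJ, Matrix.fromBlocks_transpose, Matrix.fromBlocks_multiply,
      Matrix.fromBlocks_multiply, fromBlocks_eq_iff]
    refine ⟨?_, ?_, ?_, ?_⟩ <;> noncomm_ring
  rw [e2, hJ] at hMJMt
  obtain ⟨hAB, -, hDA, -⟩ := (fromBlocks_eq_iff _ _ _ _ _ _ _ _).mp hMJMt
  have hBAt : B * Aᵀ = A * Bᵀ := by
    have h : B * Aᵀ = A * Bᵀ - (B * (-Aᵀ) + A * Bᵀ) := by noncomm_ring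
    rw [h, hAB, sub_zero]
  have hDAt : D * Aᵀ = 1 + C * Bᵀ := by
    have h : D * Aᵀ = C * Bᵀ - (D * (-Aᵀ) + C * Bᵀ) := by noncomm_ring
    rw [h, hDA]; noncomm_ring
  have hAtD : Aᵀ * D = 1 + Cᵀ * B := by
    have h : Aᵀ * D = Cᵀ * B + (Cᵀ * (-B) + Aᵀ * D) := by noncomm_ring
    rw [h, hAD]; exact add_comm _ _
  have hBtD : Bᵀ * D = Dᵀ * B := by
    have h : Bᵀ * D = Dᵀ * B + (Dᵀ * (-B) + Bᵀ * D) := by noncomm_ring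
    rw [h, hBD, add_zero]
  have hker : ∀ y : Fin d → ℝ, (∀ z : Fin d → ℝ, y ⬝ᵥ B.mulVec z = 0) ↔ Bᵀ.mulVec y = 0 := by
    intro y
    constructor
    · intro h
      have := h (Bᵀ.mulVec y)
      rw [Matrix.dotProduct_mulVec, ← Matrix.mulVec_transpose] at this
      exact dotProduct_self_eq_zero.mp this
    · intro h z
      rw [Matrix.dotProduct_mulVec, ← Matrix.mulVec_transpose, h, zero_dotProduct]
  refine ⟨?_, ?_, ?_⟩
  · intro y hy
    have hBy : Bᵀ.mulVec y = 0 := (hker y).mp hy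
    rw [Matrix.mulVec_mulVec, hBAt, ← Matrix.mulVec_mulVec, hBy, Matrix.mulVec_zero]
  · intro y hy y' hy' heq
    simp only [Set.mem_setOf_eq] at hy hy'
    have hBy : Bᵀ.mulVec y = 0 := (hker y).mp hy
    have hBy' : Bᵀ.mulVec y' = 0 := (hker y').mp hy'
    have key : ∀ w : Fin d → ℝ, Bᵀ.mulVec w = 0 → D.mulVec (Aᵀ.mulVec w) = w := by
      intro w hw
      rw [Matrix.mulVec_mulVec, hDAt, Matrix.add_mulVec, Matrix.one_mulVec,
        ← Matrix.mulVec_mulVec, hw, Matrix.mulVec_zero, add_zero]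
    simp only at heq
    rw [← key y hBy, ← key y' hBy', heq]
  · intro x hx
    refine ⟨D.mulVec x, (hker _).mpr ?_, ?_⟩
    · rw [Matrix.mulVec_mulVec, hBtD, ← Matrix.mulVec_mulVec, hx, Matrix.mulVec_zero]
    · rw [Matrix.mulVec_mulVec, hAtD, Matrix.add_mulVec, Matrix.one_mulVec,
        ← Matrix.mulVec_mulVec, hx, Matrix.mulVec_zero, add_zero]
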